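/- The curvature d-tensor S^l_{ijk} of the rheonomic Berwald–Moór metric has the following values (no summation over repeated indices): (1) S^l_{ijk} = 0 when i, j, k, l are pairwise distinct; (2) S^l_{iik} = −(1/16)·y_l/((y_i)²·y_k) when i, k, l are pairwise distinct; (3) S^l_{iji} = (1/16)·y_l/((y_i)²·y_j) when i, j, l are pairwise distinct; (4) S^i_{ijk} = 0 when i, j, k are pairwise distinct; (5) S^l_{ilk} = 1/(16·y_i·y_k) when i, k, l are pairwise distinct; (6) S^l_{ijl} = −1/(16·y_i·y_j) when i, j, l are pairwise distinct; (7) S^l_{iil} = 1/(8·(y_i)²) when i ≠ l; (8) S^l_{ili} = −1/(8·(y_i)²) when i ≠ l; (9) S^l_{llk} = 0 when k ≠ l; (10) S^l_{ljl} = 0 when j ≠ l. -/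

import Mathlib

/-!
Each Christoffel-type coefficient `C^l_{ij} = A^l_{ij} y_l / (y_i y_j)` is a Laurent monomial,
so its `k`-th partial derivative is `A^l_{ij} (δ_{lk} - δ_{ik} - δ_{jk}) y_l / (y_i y_j y_k)`,
and every product `C^m_{ij} C^l_{mk}` equals `A^m_{ij} A^l_{mk} y_l / (y_i y_j y_k)`.
Hence `S^l_{ijk} = s^l_{ijk} y_l / (y_i y_j y_k)` for a coefficient `s` that is a polynomial
in the constants `A` alone. For the Berwald–Moór values of `A` these are rational numbers,
and the ten cases of the theorem become a finite computation with them.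
-/

/-- Partial derivative of a function of `y : Fin 4 → ℝ` with respect to the
`k`-th component, evaluated at `y`. -/
noncomputable def pd (f : (Fin 4 → ℝ) → ℝ) (k : Fin 4) (y : Fin 4 → ℝ) : ℝ :=
  deriv (fun s => f (Function.update y k s)) (y k)

def kroneckerDelta {ι R : Type*} [DecidableEq ι] [Zero R] [One R] (i j : ι) : R :=
  if i = j then 1 else 0

local notation "δ" => kroneckerDelta

section

variable {ι : Type*} [DecidableEq ι]

lemma kroneckerDelta_mul_apply {R : Type*} [MulZeroOneClass R] (y : ι → R) (p k : ι) :
    δ p k * y p = δ p k * y k := by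
  unfold kroneckerDelta
  split_ifs with h <;> simp [h]

lemma hasDerivAt_update_apply {𝕜 : Type*} [NontriviallyNormedField 𝕜] [Fintype ι]
    (y : ι → 𝕜) (k p : ι) :
    HasDerivAt (fun s => Function.update y k s p) (δ p k) (y k) := by
  simpa [kroneckerDelta, Pi.single_apply] using
    hasDerivAt_pi.1 (hasDerivAt_update y k (y k)) p

def curvatureCoeff {R : Type*} [CommRing R] [Fintype ι] (A : ι → ι → ι → R) (l i j k : ι) : R :=
  A l i j * (δ l k - δ i k - δ j k) - A l i k * (δ l j - δ i j - δ k j)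
    + ∑ m, (A m i j * A l m k - A m i k * A l m j)

lemma map_curvatureCoeff {R R' : Type*} [CommRing R] [CommRing R'] [Fintype ι] (f : R →+* R')
    (A : ι → ι → ι → R) (l i j k : ι) :
    curvatureCoeff (fun i j k => f (A i j k)) l i j k = f (curvatureCoeff A l i j k) := by
  simp [curvatureCoeff, kroneckerDelta, apply_ite f]

end

lemma pd_mul_div_mul (a : ℝ) {y : Fin 4 → ℝ} (hy : ∀ i, y i ≠ 0) (l i j k : Fin 4) :
    pd (fun z => a * z l / (z i * z j)) k y
      = a * (δ l k - δ i k - δ j k) * (y l / (y i * y j * y k)) := by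
  have hd := ((hasDerivAt_update_apply y k l).const_mul a).fun_div
    ((hasDerivAt_update_apply y k i).fun_mul (hasDerivAt_update_apply y k j))
    (by simp [hy])
  rw [pd, hd.deriv]
  simp only [Function.update_eq_self]
  have hl := kroneckerDelta_mul_apply y l k
  have hi := kroneckerDelta_mul_apply y i k
  have hj := kroneckerDelta_mul_apply y j k
  field_simp [hy]
  linear_combination (-a * y i * y j) * hl + (a * y j * y l) * hi + (a * y i * y l) * hj

theorem curvature_eq_curvatureCoeff_mul {y : Fin 4 → ℝ} (hy : ∀ i, y i ≠ 0)
    (A : Fin 4 → Fin 4 → Fin 4 → ℝ) (C : Fin 4 → Fin 4 → Fin 4 → (Fin 4 → ℝ) → ℝ)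
    (hC : ∀ i j k z, C i j k z = A i j k * z i / (z j * z k)) (l i j k : Fin 4) :
    pd (C l i j) k y - pd (C l i k) j y + ∑ m, (C m i j y * C l m k y - C m i k y * C l m j y)
      = curvatureCoeff A l i j k * (y l / (y i * y j * y k)) := by
  obtain rfl : C = fun i j k z => A i j k * z i / (z j * z k) := by
    funext i j k z
    exact hC i j k z
  rw [pd_mul_div_mul _ hy, pd_mul_div_mul _ hy, curvatureCoeff, add_mul, Finset.sum_mul]
  congr 1
  · ring
  · refine Finset.sum_congr rfl fun m _ => ?_
    field_simp [hy]

def berwaldMoorA (i j k : Fin 4) : ℚ :=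
  (2 * δ i j + 2 * δ i k + 2 * δ j k - 8 * δ i j * δ j k - 1) / 8

-- `decide` alone gets stuck on `ℚ` arithmetic; the kernel evaluates it directly.
theorem berwaldMoor_curvatureCoeff_values :
    (∀ l i j k : Fin 4, i ≠ j → i ≠ k → i ≠ l → j ≠ k → j ≠ l → k ≠ l →
      curvatureCoeff berwaldMoorA l i j k = 0) ∧
    (∀ l i k : Fin 4, i ≠ k → k ≠ l → i ≠ l → curvatureCoeff berwaldMoorA l i i k = -1 / 16) ∧
    (∀ l i j : Fin 4, i ≠ j → j ≠ l → i ≠ l → curvatureCoeff berwaldMoorA l i j i = 1 / 16) ∧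
    (∀ i j k : Fin 4, i ≠ j → j ≠ k → i ≠ k → curvatureCoeff berwaldMoorA i i j k = 0) ∧
    (∀ l i k : Fin 4, i ≠ k → k ≠ l → i ≠ l → curvatureCoeff berwaldMoorA l i l k = 1 / 16) ∧
    (∀ l i j : Fin 4, i ≠ j → j ≠ l → i ≠ l → curvatureCoeff berwaldMoorA l i j l = -1 / 16) ∧
    (∀ l i : Fin 4, i ≠ l → curvatureCoeff berwaldMoorA l i i l = 1 / 8) ∧
    (∀ l i : Fin 4, i ≠ l → curvatureCoeff berwaldMoorA l i l i = -1 / 8) ∧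
    (∀ l k : Fin 4, k ≠ l → curvatureCoeff berwaldMoorA l l l k = 0) ∧
    (∀ l j : Fin 4, j ≠ l → curvatureCoeff berwaldMoorA l l j l = 0) := by
  refine ⟨?_, ?_, ?_, ?_, ?_, ?_, ?_, ?_, ?_, ?_⟩ <;> decide +kernel

/-- The values of the curvature d-tensor `S^l_{ijk}` of the
rheonomic Berwald–Moór metric (ten cases, no summation over repeated
indices). -/
theorem berwald_moor_S_values
    (y : Fin 4 → ℝ) (hy : ∀ i, 0 < y i)
    (A : Fin 4 → Fin 4 → Fin 4 → ℝ)
    (hA : ∀ i j k, A i j k =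
      (2 * (if i = j then (1 : ℝ) else 0) + 2 * (if i = k then (1 : ℝ) else 0)
        + 2 * (if j = k then (1 : ℝ) else 0)
        - 8 * (if i = j then (1 : ℝ) else 0) * (if j = k then (1 : ℝ) else 0)
        - 1) / 8)
    (C : Fin 4 → Fin 4 → Fin 4 → (Fin 4 → ℝ) → ℝ)
    (hC : ∀ i j k z, C i j k z = A i j k * z i / (z j * z k))
    (S : Fin 4 → Fin 4 → Fin 4 → Fin 4 → ℝ)
    (hS : ∀ l i j k, S l i j k =
      pd (C l i j) k y - pd (C l i k) j y
        + ∑ m, (C m i j y * C l m k y - C m i k y * C l m j y)) :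
    (∀ l i j k, i ≠ j → i ≠ k → i ≠ l → j ≠ k → j ≠ l → k ≠ l →
      S l i j k = 0) ∧
    (∀ l i k, i ≠ k → k ≠ l → i ≠ l →
      S l i i k = -(1 / 16) * y l / ((y i) ^ 2 * y k)) ∧
    (∀ l i j, i ≠ j → j ≠ l → i ≠ l →
      S l i j i = (1 / 16) * y l / ((y i) ^ 2 * y j)) ∧
    (∀ i j k, i ≠ j → j ≠ k → i ≠ k →
      S i i j k = 0) ∧
    (∀ l i k, i ≠ k → k ≠ l → i ≠ l →
      S l i l k = 1 / (16 * y i * y k)) ∧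
    (∀ l i j, i ≠ j → j ≠ l → i ≠ l →
      S l i j l = -(1 / (16 * y i * y j))) ∧
    (∀ l i, i ≠ l → S l i i l = 1 / (8 * (y i) ^ 2)) ∧
    (∀ l i, i ≠ l → S l i l i = -(1 / (8 * (y i) ^ 2))) ∧
    (∀ l k, k ≠ l → S l l l k = 0) ∧
    (∀ l j, j ≠ l → S l l j l = 0) := by
  have hy₀ (i : Fin 4) : y i ≠ 0 := (hy i).ne'
  have hA' : A = fun i j k => ((berwaldMoorA i j k : ℚ) : ℝ) := by
    funext i j k
    simp [hA, berwaldMoorA, kroneckerDelta, apply_ite (Rat.cast : ℚ → ℝ)]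
  have hS' (l i j k : Fin 4) :
      S l i j k = ((curvatureCoeff berwaldMoorA l i j k : ℚ) : ℝ) * (y l / (y i * y j * y k)) := by
    rw [hS, curvature_eq_curvatureCoeff_mul hy₀ A C hC, hA', ← Rat.coe_castHom,
      map_curvatureCoeff]
  obtain ⟨h₁, h₂, h₃, h₄, h₅, h₆, h₇, h₈, h₉, h₁₀⟩ := berwaldMoor_curvatureCoeff_values
  refine ⟨fun l i j k hij hik hil hjk hjl hkl => ?_, fun l i k hik hkl hil => ?_,
    fun l i j hij hjl hil => ?_, fun i j k hij hjk hik => ?_, fun l i k hik hkl hil => ?_,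
    fun l i j hij hjl hil => ?_, fun l i hil => ?_, fun l i hil => ?_, fun l k hkl => ?_,
    fun l j hjl => ?_⟩
  · rw [hS', h₁ l i j k hij hik hil hjk hjl hkl]; simp
  · rw [hS', h₂ l i k hik hkl hil]; push_cast; ring
  · rw [hS', h₃ l i j hij hjl hil]; push_cast; ring
  · rw [hS', h₄ i j k hij hjk hik]; simp
  · rw [hS', h₅ l i k hik hkl hil]; push_cast; field_simp [hy₀]
  · rw [hS', h₆ l i j hij hjl hil]; push_cast; field_simp [hy₀]
  · rw [hS', h₇ l i hil]; push_cast; field_simp [hy₀]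
  · rw [hS', h₈ l i hil]; push_cast; field_simp [hy₀]
  · rw [hS', h₉ l k hkl]; simp
  · rw [hS', h₁₀ l j hjl]; simp
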